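/- Let r(n) be defined by r(1)=r(2)=0 and, for n ≥ 3, r(n) = max over 1 ≤ i ≤ n/2 of (2i - 1 - [i = n/2] + r(i) + r(n-i)), where [i=n/2] is 1 if i = n/2 and 0 otherwise. Then r(n) ≤ n·log₂(n) for all n ≥ 1. -/

import Mathlib

/-!
Induct on `n`, splitting `n = i + j` at the maximizing `i ≤ j`. With `f x = x log₂ x`,
it suffices that `2i + f i + f j ≤ f (i + j)`: the first `i` of the `2i` is paid for by
`log₂ (2i) ≤ log₂ (i + j)`, the second by `log₂ (1 + i/j) ≥ i/j`, which is the concavity of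
`log₂` on `[1, 2]` (equivalently Bernoulli's inequality `2 ^ x ≤ 1 + x` for `x ∈ [0, 1]`).
-/

/-- r(1)=r(2)=0 and r(n) = max_{1 ≤ i ≤ n/2} (2i - 1 - [i = n/2] + r(i) + r(n-i)). -/
def rr : ℕ → ℕ
  | 0 => 0
  | 1 => 0
  | 2 => 0
  | n + 3 =>
    (Finset.Icc 1 ((n + 3) / 2)).attach.sup fun i =>
      2 * i.1 - 1 - (if 2 * i.1 = n + 3 then 1 else 0) + rr i.1 + rr (n + 3 - i.1)
  termination_by n => n
  decreasing_by
  · have := Finset.mem_Icc.mp i.2; omega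
  · have := Finset.mem_Icc.mp i.2; omega

open Real

lemma le_logb_two_one_add {x : ℝ} (hx0 : 0 ≤ x) (hx1 : x ≤ 1) : x ≤ logb 2 (1 + x) := by
  rw [le_logb_iff_rpow_le one_lt_two (by linarith)]
  simpa [one_add_one_eq_two] using rpow_one_add_le_one_add_mul_self (s := 1) (by norm_num) hx0 hx1

lemma two_mul_add_mul_logb_add_mul_logb_le {i j : ℝ} (hi : 0 < i) (hij : i ≤ j) :
    2 * i + i * logb 2 i + j * logb 2 j ≤ (i + j) * logb 2 (i + j) := by
  have hj : 0 < j := hi.trans_le hij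
  have hlog_i : 1 + logb 2 i ≤ logb 2 (i + j) := by
    calc 1 + logb 2 i = logb 2 (2 * i) := by
          rw [logb_mul two_ne_zero hi.ne', logb_self_eq_one one_lt_two]
      _ ≤ logb 2 (i + j) := logb_le_logb_of_le one_lt_two (by positivity) (by linarith)
  have hlog_j : logb 2 j + i / j ≤ logb 2 (i + j) := by
    have hdiv := le_logb_two_one_add (div_nonneg hi.le hj.le) ((div_le_one hj).mpr hij)
    calc logb 2 j + i / j ≤ logb 2 j + logb 2 (1 + i / j) := by linarith
      _ = logb 2 (i + j) := by
          rw [← logb_mul hj.ne' (by positivity), mul_one_add, mul_div_cancel₀ _ hj.ne', add_comm]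
  have hj_div : j * (i / j) = i := mul_div_cancel₀ _ hj.ne'
  nlinarith [mul_le_mul_of_nonneg_left hlog_i hi.le, mul_le_mul_of_nonneg_left hlog_j hj.le]

lemma exists_rr_add_three_le (n : ℕ) :
    ∃ i, 1 ≤ i ∧ 2 * i ≤ n + 3 ∧ rr (n + 3) ≤ 2 * i + rr i + rr (n + 3 - i) := by
  have hne : (Finset.Icc 1 ((n + 3) / 2)).attach.Nonempty := by
    rw [Finset.attach_nonempty_iff, Finset.nonempty_Icc]
    omega
  obtain ⟨⟨i, hi⟩, -, hsup⟩ := Finset.exists_mem_eq_sup _ hne fun i =>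
    2 * i.1 - 1 - (if 2 * i.1 = n + 3 then 1 else 0) + rr i.1 + rr (n + 3 - i.1)
  obtain ⟨hi1, hi2⟩ := Finset.mem_Icc.mp hi
  refine ⟨i, hi1, by omega, ?_⟩
  rw [rr, hsup]
  dsimp only
  omega

theorem stmt15_general (n : ℕ) : (rr n : ℝ) ≤ n * Real.logb 2 n := by
  induction n using Nat.strong_induction_on with
  | _ n ih =>
    match n with
    | 0 | 1 | 2 => simp [rr]
    | n + 3 =>
      obtain ⟨i, hi1, hi2, hrr⟩ := exists_rr_add_three_le n
      have hsplit : ((n + 3 : ℕ) : ℝ) = i + (n + 3 - i : ℕ) := by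
        rw [← Nat.cast_add]; congr 1; omega
      have hkey := two_mul_add_mul_logb_add_mul_logb_le (i := i) (j := (n + 3 - i : ℕ))
        (by exact_mod_cast hi1) (by exact_mod_cast (by omega : i ≤ n + 3 - i))
      have ih_i := ih i (by omega)
      have ih_j := ih (n + 3 - i) (by omega)
      have hrr' : (rr (n + 3) : ℝ) ≤ 2 * i + rr i + rr (n + 3 - i) := by exact_mod_cast hrr
      rw [hsplit]
      linarith

/-- r(n) ≤ n · log₂ n for all n ≥ 1. -/
theorem stmt15 (n : ℕ) (hn : 1 ≤ n) : (rr n : ℝ) ≤ n * Real.logb 2 n :=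
  stmt15_general n
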